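/- Let n ≥ 9 and let (1 | m_1, …, m_n) be a normalized reduced class with m_1² + ⋯ + m_n² < 1 (positive square). Then it is not the case that both m_1 + m_2 + m_3 = 1 and m_1 = m_2 = ⋯ = m_9; that is, the simple roots l_0, l_1, …, l_8 cannot all pair to zero with the class. (The claim proved in Lemma 2.17(iv): the Lagrangian root system of a reduced symplectic class contains no affine Ẽ_8 configuration, hence is a direct sum of ADE type root systems.) -/

import Mathlib

open Finset

theorem card_mul_sq_le_sum_sq {R : Type*} [CommRing R] [LinearOrder R] [IsStrictOrderedRing R]
    {n k : ℕ} (hk : k ≤ n) {m : Fin n → R} {c : R} (hc : ∀ i : Fin n, (i : ℕ) < k → m i = c) :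
    k * c ^ 2 ≤ ∑ i, m i ^ 2 :=
  calc (k : R) * c ^ 2 = ∑ j : Fin k, m (Fin.castLEEmb hk j) ^ 2 := by
        rw [sum_congr rfl fun j _ ↦ by rw [hc _ j.2]]; simp
    _ = ∑ i ∈ univ.map (Fin.castLEEmb hk), m i ^ 2 := by rw [sum_map]
    _ ≤ ∑ i, m i ^ 2 := sum_le_univ_sum_of_nonneg fun _ ↦ sq_nonneg _

theorem no_affine_E8_configuration
    (n : ℕ) (hn : 9 ≤ n) (m : Fin n → ℝ)
    (hsq : ∑ i, (m i) ^ 2 < 1) :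
    ¬ (m ⟨0, by omega⟩ + m ⟨1, by omega⟩ + m ⟨2, by omega⟩ = 1 ∧
        ∀ i : Fin n, (i : ℕ) < 9 → m i = m ⟨0, by omega⟩) := by
  rintro ⟨hsum, hconst⟩
  have hthird : m ⟨0, by omega⟩ = 1 / 3 := by
    rw [hconst ⟨1, by omega⟩ (by norm_num), hconst ⟨2, by omega⟩ (by norm_num)] at hsum
    linarith
  have hnine := card_mul_sq_le_sum_sq hn hconst
  norm_num [hthird] at hnine
  linarith
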